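/- Let n ≥ 1 and let A_n denote the alternating group of even permutations of Fin n, acting on vectors λ : Fin n → ℝ by (σ·λ) i = λ (σ⁻¹ i). For all λ, μ, x : Fin n → ℝ, the product of two normalized E-orbit functions decomposes as Ê_λ(x) · Ê_μ(x) = ∑_{σ ∈ A_n} Ê_{λ + σ·μ}(x). In particular, the product of two E-orbit functions is a sum of E-orbit functions with non-negative integer coefficients. -/
import Mathlib


/-- The action of a permutation on vectors: `(σ · v) i = v (σ⁻¹ i)`. -/
def permAct {n : ℕ} (σ : Equiv.Perm (Fin n)) (v : Fin n → ℝ) : Fin n → ℝ :=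
  fun i => v (σ⁻¹ i)

/-- The normalized `E`-orbit function
`Ê_λ(x) = ∑_{σ ∈ Aₙ} exp(2πi ∑ᵢ λ(σ⁻¹ i) · x i)`. -/
noncomputable def Ehat (n : ℕ) (lam x : Fin n → ℝ) : ℂ :=
  ∑ σ : alternatingGroup (Fin n),
    Complex.exp (2 * (Real.pi : ℂ) * Complex.I *
      ((∑ i, lam ((σ : Equiv.Perm (Fin n))⁻¹ i) * x i : ℝ) : ℂ))

/-- The product of two normalized `E`-orbit functions decomposes as a sum of
normalized `E`-orbit functions: `Ê_λ(x) · Ê_μ(x) = ∑_{σ ∈ Aₙ} Ê_{λ + σ·μ}(x)`. -/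
theorem Ehat_mul_Ehat (n : ℕ) (hn : 1 ≤ n) (lam mu x : Fin n → ℝ) :
    Ehat n lam x * Ehat n mu x =
      ∑ σ : alternatingGroup (Fin n),
        Ehat n (lam + permAct (σ : Equiv.Perm (Fin n)) mu) x := by
  simp only [Ehat, permAct, Finset.sum_mul_sum]
  conv_rhs => rw [Finset.sum_comm]
  refine Finset.sum_congr rfl fun τ _ => ?_
  refine Fintype.sum_equiv (Equiv.mulLeft τ⁻¹) _ _ fun ρ => ?_
  rw [← Complex.exp_add, ← mul_add]
  congr 1
  push_cast
  congr 1
  rw [← Finset.sum_add_distrib]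
  refine Finset.sum_congr rfl fun i _ => ?_
  simp [permAct, mul_inv_rev, add_mul]
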